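/- Let P₁ and P₂ be nonempty sets of primes and let G₁ = ∏*_{p∈P₁} ℤ[1/p] and G₂ = ∏*_{p∈P₂} ℤ[1/p] be the free products of the corresponding subgroups of ℚ. If P₁ ⊄ P₂ then G₁ does not embed into G₂. -/

import Mathlib

/-!
Call `x` `q`-divisible if it is a `q ^ n`-th power for every `n`; homomorphisms preserve this.
The generator `1` of `ℤ[1/q]` is `q`-divisible, but for a prime `p ≠ q` the only `q`-divisible
element of `ℤ[1/p]` is `0`, because `ℤ[1/p]` has `q`-adic norm at most `1`.

In a free product, write a `q`-divisible `x` as `y ^ N` with `N = q ^ |x|`, `|·|` the reduced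
word length. Up to conjugation, `y` is a letter or a cyclically reduced `v`. In the first case
`x` is conjugate to a letter `h ^ N`, and projecting onto that factor shows `h ^ N = 1`. In the
second case `|x| ≥ N |v|`, which forces `v = 1`. Hence, for `q ∈ P₁ \ P₂`, an injective
homomorphism cannot exist: it would send the generator of `ℤ[1/q]` to a `q`-divisible element.
-/

/-- `ℤ[1/p] = { m / p ^ k : m ∈ ℤ, k ∈ ℕ }` as an additive subgroup of `ℚ`
(isomorphic to the multiplicative group `Γ_p = { e ^ (n p ^ k) : n, k ∈ ℤ }`). -/
def Zinv (p : ℕ) : AddSubgroup ℚ :=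
  AddSubgroup.closure {x : ℚ | ∃ (m : ℤ) (k : ℕ), x = (m : ℚ) / (p : ℚ) ^ k}

def IsPDivisible {G : Type*} [Monoid G] (p : ℕ) (x : G) : Prop :=
  ∀ n : ℕ, ∃ y : G, y ^ p ^ n = x

theorem IsPDivisible.map {G H F : Type*} [Monoid G] [Monoid H] [FunLike F G H]
    [MonoidHomClass F G H] {p : ℕ} {x : G} (hx : IsPDivisible p x) (f : F) :
    IsPDivisible p (f x) := fun n =>
  let ⟨y, hy⟩ := hx n
  ⟨f y, by rw [← map_pow, hy]⟩

namespace Monoid.CoprodI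

section Monoid

variable {ι : Type*} {M : ι → Type*} [∀ i, Monoid (M i)]

theorem NeWord.exists_prod_pow {i j : ι} (w : NeWord M i j) (hji : j ≠ i) (n : ℕ) :
    ∃ w' : NeWord M i j,
      w'.prod = w.prod ^ (n + 1) ∧ w'.toList.length = (n + 1) * w.toList.length := by
  induction n with
  | zero => exact ⟨w, by simp, by simp⟩
  | succ n ih =>
    obtain ⟨w', hprod, hlen⟩ := ih
    refine ⟨.append w' hji w, by rw [NeWord.append_prod, hprod, ← pow_succ], ?_⟩
    simp only [NeWord.toList, List.length_append, hlen]
    ring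

variable [∀ i, DecidableEq (M i)]

theorem Word.length_rcons_le {i : ι} (p : Word.Pair M i) :
    (Word.rcons p).toList.length ≤ p.tail.toList.length + 1 := by
  unfold Word.rcons
  split_ifs <;> simp [Word.cons]

variable [DecidableEq ι]

theorem Word.length_tail_equivPair_le (i : ι) (w : Word M) :
    (Word.equivPair i w).tail.toList.length ≤ w.toList.length := by
  conv_rhs => rw [← (Word.equivPair i).symm_apply_apply w, Word.equivPair_symm]
  unfold Word.rcons
  split_ifs <;> simp [Word.cons]

theorem Word.equiv_prod (w : Word M) : Word.equiv w.prod = w :=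
  Word.equiv.apply_symm_apply w

theorem Word.prod_equiv (x : CoprodI M) : (Word.equiv x).prod = x :=
  Word.equiv.symm_apply_apply x

def wordLength (x : CoprodI M) : ℕ := (Word.equiv x).toList.length

theorem wordLength_prod (w : Word M) : wordLength w.prod = w.toList.length := by
  rw [wordLength, Word.equiv_prod]

theorem NeWord.wordLength_prod {i j : ι} (w : NeWord M i j) :
    wordLength w.prod = w.toList.length :=
  CoprodI.wordLength_prod w.toWord

theorem wordLength_one : wordLength (1 : CoprodI M) = 0 :=
  wordLength_prod Word.empty

theorem eq_one_of_wordLength_eq_zero {x : CoprodI M} (h : wordLength x = 0) : x = 1 := by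
  have : Word.equiv x = Word.empty := Word.ext (List.length_eq_zero_iff.mp h)
  rw [← Word.prod_equiv x, this, Word.prod_empty]

theorem wordLength_of_mul_le {i : ι} (m : M i) (x : CoprodI M) :
    wordLength (of m * x) ≤ wordLength x + 1 := by
  change ((of m * x) • Word.empty).toList.length ≤ (x • Word.empty).toList.length + 1
  rw [mul_smul, Word.of_smul_def]
  exact (Word.length_rcons_le _).trans (by grw [Word.length_tail_equivPair_le])

theorem wordLength_list_prod_mul_le (L : List (Σ i, M i)) (y : CoprodI M) :
    wordLength ((L.map fun a => of a.2).prod * y) ≤ L.length + wordLength y := by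
  induction L with
  | nil => simp
  | cons a L ih =>
    rw [List.map_cons, List.prod_cons, mul_assoc, List.length_cons]
    grw [wordLength_of_mul_le, ih]
    omega

theorem wordLength_list_prod_le (L : List (Σ i, M i)) :
    wordLength (L.map fun a => of a.2).prod ≤ L.length := by
  simpa [wordLength_one] using wordLength_list_prod_mul_le L 1

theorem wordLength_mul_le (x y : CoprodI M) : wordLength (x * y) ≤ wordLength x + wordLength y :=
  calc wordLength (x * y) = wordLength ((Word.equiv x).prod * y) := by
        rw [Word.prod_equiv]
    _ ≤ wordLength x + wordLength y := wordLength_list_prod_mul_le _ y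

theorem wordLength_pow_le (x : CoprodI M) (n : ℕ) : wordLength (x ^ n) ≤ n * wordLength x := by
  induction n with
  | zero => simp [wordLength_one]
  | succ n ih =>
    grw [pow_succ, wordLength_mul_le, ih, Nat.succ_mul]

/-- Unlike the usual convention, a single nontrivial letter is *not* cyclically reduced here. -/
def IsCyclicallyReduced (x : CoprodI M) : Prop :=
  ∀ a ∈ (Word.equiv x).toList.head?, ∀ b ∈ (Word.equiv x).toList.getLast?, a.1 ≠ b.1

theorem IsCyclicallyReduced.wordLength_pow {x : CoprodI M} (hx : IsCyclicallyReduced x) (n : ℕ) :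
    wordLength (x ^ n) = n * wordLength x := by
  rcases eq_or_ne (Word.equiv x) Word.empty with hx1 | hx1
  · rw [← Word.prod_equiv x, hx1, Word.prod_empty, one_pow, wordLength_one, mul_zero]
  obtain ⟨i, j, w, hw⟩ := NeWord.of_word _ hx1
  have hxw : x = w.prod := by rw [NeWord.prod, hw, Word.prod_equiv]
  have hij : i ≠ j := by
    refine hx ⟨i, w.head⟩ ?_ ⟨j, w.last⟩ ?_ <;> rw [← hw]
    exacts [w.toList_head?, w.toList_getLast?]
  rcases n with _ | n
  · simp [wordLength_one]
  obtain ⟨w', hprod, hlen⟩ := w.exists_prod_pow hij.symm n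
  rw [hxw, ← hprod, NeWord.wordLength_prod, NeWord.wordLength_prod, hlen]

end Monoid

section Group

variable {ι : Type*} [DecidableEq ι] {G : ι → Type*} [∀ i, Group (G i)] [∀ i, DecidableEq (G i)]

theorem IsCyclicallyReduced.mul_wordLength_le_wordLength_conj {z : CoprodI G}
    (hz : IsCyclicallyReduced z) (c : CoprodI G) (n : ℕ) :
    n * wordLength z ≤ wordLength (c * z ^ n * c⁻¹) := by
  -- Savings on `z ^ n` add up in `z ^ (n * N)`; undoing the conjugation costs a bounded amount.
  by_contra! hlt
  set K := wordLength (c * z ^ n * c⁻¹)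
  set N := wordLength c⁻¹ + wordLength c + 1 with hN
  have hupper : N * (n * wordLength z) ≤ wordLength c⁻¹ + N * K + wordLength c :=
    calc N * (n * wordLength z) = wordLength (z ^ (n * N)) := by
          rw [hz.wordLength_pow]; ring
      _ = wordLength (c⁻¹ * (c * z ^ n * c⁻¹) ^ N * c) := by rw [conj_pow, pow_mul]; group
      _ ≤ wordLength c⁻¹ + N * K + wordLength c := by
          grw [wordLength_mul_le, wordLength_mul_le, wordLength_pow_le]
  have hlower : N * (K + 1) ≤ N * (n * wordLength z) := Nat.mul_le_mul_left N hlt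
  linarith

theorem exists_conj_eq_of_or_isCyclicallyReduced (x : CoprodI G) :
    ∃ c y, x = c * y * c⁻¹ ∧ ((∃ (i : ι) (g : G i), y = of g) ∨ IsCyclicallyReduced y) := by
  induction hn : wordLength x using Nat.strong_induction_on generalizing x with
  | _ n ih =>
  by_cases hx : IsCyclicallyReduced x
  · exact ⟨1, x, by group, .inr hx⟩
  obtain ⟨a, ha, b, hb, hab⟩ : ∃ a ∈ (Word.equiv x).toList.head?,
      ∃ b ∈ (Word.equiv x).toList.getLast?, a.1 = b.1 := by
    simpa [IsCyclicallyReduced] using hx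
  have hxL := (Word.prod_equiv x).symm
  generalize hL : (Word.equiv x).toList = L at ha hb
  rw [Word.prod, hL] at hxL
  rw [wordLength, hL] at hn
  rcases L with _ | ⟨a', L₁⟩
  · simp at ha
  obtain rfl : a = a' := by simpa [eq_comm] using ha
  rcases L₁.eq_nil_or_concat with rfl | ⟨L₂, b', rfl⟩
  · exact ⟨1, x, by group, .inl ⟨a.1, a.2, by simpa using hxL⟩⟩
  obtain rfl : b = b' := by
    rw [List.concat_eq_append, ← List.cons_append, List.getLast?_concat] at hb
    simpa [eq_comm] using hb
  obtain ⟨i, g⟩ := a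
  obtain ⟨j, h⟩ := b
  obtain rfl : i = j := hab
  -- The first and last letters lie in the same factor, so conjugating by the first one merges them.
  have hshort : wordLength ((of g)⁻¹ * x * of g) < n := by
    have hconj : (of g)⁻¹ * x * of g =
        ((L₂ ++ [(⟨i, h * g⟩ : Σ i, G i)]).map fun a => of a.2).prod := by
      simp [hxL, mul_assoc]
    grw [hconj, wordLength_list_prod_le]
    simp [← hn]
  obtain ⟨c, y, hcy, hy⟩ := ih _ hshort _ rfl
  refine ⟨of g * c, y, ?_, hy⟩
  calc x = of g * ((of g)⁻¹ * x * of g) * (of g)⁻¹ := by group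
    _ = of g * c * y * (of g * c)⁻¹ := by rw [hcy]; group

end Group

theorem eq_one_of_isPDivisible {ι : Type*} {G : ι → Type*} [∀ i, Group (G i)] {p : ℕ}
    (hp : 2 ≤ p) (hG : ∀ i (g : G i), IsPDivisible p g → g = 1) {x : CoprodI G}
    (hx : IsPDivisible p x) : x = 1 := by
  classical
  obtain ⟨y, hy⟩ := hx (wordLength x)
  obtain ⟨c, v, rfl, ⟨i, h, rfl⟩ | hv⟩ := exists_conj_eq_of_or_isCyclicallyReduced y
  · have hproj := hG i _ (hx.map (lift (Pi.mulSingle i (MonoidHom.id (G i)))))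
    rw [← hy, conj_pow, ← map_pow] at hproj ⊢
    have : h ^ p ^ wordLength x = 1 := by simpa using hproj
    rw [this, map_one, mul_one, mul_inv_cancel]
  · have hlen := hv.mul_wordLength_le_wordLength_conj c (p ^ wordLength x)
    rw [← conj_pow, hy] at hlen
    have hv1 : v = 1 := eq_one_of_wordLength_eq_zero (by
      by_contra h0
      have := Nat.lt_pow_self (n := wordLength x) (by omega : 1 < p)
      nlinarith [Nat.one_le_iff_ne_zero.mpr h0])
    rw [← hy, hv1]
    group

end Monoid.CoprodI

namespace Zinv

theorem one_div_pow_mem (p n : ℕ) : 1 / (p : ℚ) ^ n ∈ Zinv p :=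
  AddSubgroup.subset_closure ⟨1, n, by simp⟩

theorem one_mem (p : ℕ) : (1 : ℚ) ∈ Zinv p := by
  simpa using one_div_pow_mem p 0

theorem isPDivisible_one {p : ℕ} (hp : p ≠ 0) :
    IsPDivisible p (Multiplicative.ofAdd (⟨1, one_mem p⟩ : Zinv p)) := fun n => by
  refine ⟨Multiplicative.ofAdd ⟨_, one_div_pow_mem p n⟩, ?_⟩
  rw [← ofAdd_nsmul]
  congr 1
  ext
  simp [nsmul_eq_mul, hp]

theorem padicNorm_le_one {p q : ℕ} [Fact q.Prime] (hqp : ¬ q ∣ p) {x : ℚ} (hx : x ∈ Zinv p) :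
    padicNorm q x ≤ 1 := by
  induction hx using AddSubgroup.closure_induction with
  | mem x hx =>
    obtain ⟨m, k, rfl⟩ := hx
    have hpk : padicNorm q ((p : ℚ) ^ k) = 1 := by
      rw [← Nat.cast_pow, padicNorm.nat_eq_one_iff]
      exact fun h => hqp ((Fact.out : q.Prime).dvd_of_dvd_pow h)
    rw [padicNorm.div, hpk, div_one]
    exact padicNorm.of_int m
  | zero => simp
  | add x y _ _ hx hy => exact padicNorm.nonarchimedean.trans (max_le hx hy)
  | neg x _ hx => rwa [padicNorm.neg]

theorem eq_one_of_isPDivisible {p q : ℕ} [Fact q.Prime] (hqp : ¬ q ∣ p)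
    {g : Multiplicative (Zinv p)} (hg : IsPDivisible q g) : g = 1 := by
  have hq : 1 < (q : ℚ) := by exact_mod_cast (Fact.out : q.Prime).one_lt
  have hbound (n : ℕ) : padicNorm q (g.toAdd : ℚ) ≤ (q : ℚ)⁻¹ ^ n := by
    obtain ⟨y, rfl⟩ := hg n
    have : ((y ^ q ^ n).toAdd : ℚ) = (q : ℚ) ^ n * y.toAdd := by simp [nsmul_eq_mul]
    rw [this, padicNorm.mul, IsAbsoluteValue.abv_pow (padicNorm q), padicNorm.padicNorm_p_of_prime]
    exact mul_le_of_le_one_right (by positivity) (padicNorm_le_one hqp y.toAdd.2)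
  by_contra hg1
  have hg0 : (g.toAdd : ℚ) ≠ 0 := fun h => hg1 (by ext; exact h)
  have hpos : 0 < padicNorm q (g.toAdd : ℚ) :=
    (padicNorm.nonneg _).lt_of_ne (padicNorm.nonzero hg0).symm
  obtain ⟨n, hn⟩ := exists_pow_lt_of_lt_one hpos (inv_lt_one_of_one_lt₀ hq)
  exact (hbound n).not_gt hn

end Zinv

open Monoid in
theorem stmt_17_general (P₁ P₂ : Set ℕ) (hP₁ : ∀ p ∈ P₁, p.Prime) (hP₂ : ∀ p ∈ P₂, p.Prime)
    (hsub : ¬ P₁ ⊆ P₂) :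
    ¬ ∃ f : CoprodI (fun p : P₁ => Multiplicative (Zinv p)) →*
        CoprodI (fun p : P₂ => Multiplicative (Zinv p)), Function.Injective f := by
  rintro ⟨f, hf⟩
  obtain ⟨q, hq₁, hq₂⟩ := Set.not_subset.mp hsub
  have hq : Fact q.Prime := ⟨hP₁ q hq₁⟩
  have hfactors (p : P₂) (g : Multiplicative (Zinv p)) (hg : IsPDivisible q g) : g = 1 :=
    Zinv.eq_one_of_isPDivisible
      (fun hqp => hq₂ ((Nat.prime_dvd_prime_iff_eq hq.out (hP₂ p p.2)).mp hqp ▸ p.2)) hg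
  let ofq : Multiplicative (Zinv q) →* CoprodI (fun p : P₁ => Multiplicative (Zinv p)) :=
    CoprodI.of (M := fun p : P₁ => Multiplicative (Zinv p)) (i := ⟨q, hq₁⟩)
  let e : Multiplicative (Zinv q) := .ofAdd ⟨1, Zinv.one_mem q⟩
  have hdiv : IsPDivisible q (f (ofq e)) := (Zinv.isPDivisible_one hq.out.ne_zero).map (f.comp ofq)
  have hfe : f (ofq e) = f 1 := by
    rw [map_one]
    exact CoprodI.eq_one_of_isPDivisible hq.out.two_le hfactors hdiv
  have he : e = 1 := CoprodI.of_injective (M := fun p : P₁ => Multiplicative (Zinv p)) ⟨q, hq₁⟩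
    ((hf hfe).trans (map_one ofq).symm)
  exact one_ne_zero (congrArg (fun g : Multiplicative (Zinv q) => (g.toAdd : ℚ)) he)

open Monoid in
/-- for nonempty sets of primes `P₁ ⊄ P₂`, the free product
`∏*_{p ∈ P₁} ℤ[1/p]` does not embed into the free product `∏*_{p ∈ P₂} ℤ[1/p]`. -/
theorem stmt_17 (P₁ P₂ : Set ℕ) (hP₁ : ∀ p ∈ P₁, p.Prime) (hP₂ : ∀ p ∈ P₂, p.Prime)
    (hne₁ : P₁.Nonempty) (hne₂ : P₂.Nonempty) (hsub : ¬ P₁ ⊆ P₂) :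
    ¬ ∃ f : CoprodI (fun p : P₁ => Multiplicative (Zinv p)) →*
        CoprodI (fun p : P₂ => Multiplicative (Zinv p)), Function.Injective f :=
  stmt_17_general P₁ P₂ hP₁ hP₂ hsub
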